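/- Let 0 < α < 1 and let A, B be n×n positive definite complex matrices. Then, as p → 0 from the right, R_{α,p}(A,B) = (A^{((1-α)/2)p} · B^{αp} · A^{((1-α)/2)p})^{1/p} converges to LE_α(A,B) = exp((1-α)·log A + α·log B). -/

import Mathlib

open Matrix
open scoped ComplexOrder

/-- Functional calculus for Hermitian matrices: apply `f` to the eigenvalues in a spectral
decomposition (junk value `0` on non-Hermitian matrices). -/
noncomputable def matFun {n : ℕ} (f : ℝ → ℝ) (A : Matrix (Fin n) (Fin n) ℂ) :
    Matrix (Fin n) (Fin n) ℂ :=
  if hA : A.IsHermitian then hA.cfc f else 0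

/-- Matrix power `A ^ r` (`r : ℝ`) by functional calculus. -/
noncomputable def mpow {n : ℕ} (A : Matrix (Fin n) (Fin n) ℂ) (r : ℝ) :
    Matrix (Fin n) (Fin n) ℂ :=
  matFun (fun x => x ^ r) A

/-- Matrix logarithm by functional calculus. -/
noncomputable def mlog {n : ℕ} (A : Matrix (Fin n) (Fin n) ℂ) : Matrix (Fin n) (Fin n) ℂ :=
  matFun Real.log A

/-- Matrix exponential (of a Hermitian matrix) by functional calculus. -/
noncomputable def mexp {n : ℕ} (A : Matrix (Fin n) (Fin n) ℂ) : Matrix (Fin n) (Fin n) ℂ :=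
  matFun Real.exp A

/-- Quasi `α`-weighted arithmetic mean `𝒜_{α,p}(A,B) = ((1-α)A^p + αB^p)^{1/p}`. -/
noncomputable def qam {n : ℕ} (α p : ℝ) (A B : Matrix (Fin n) (Fin n) ℂ) :
    Matrix (Fin n) (Fin n) ℂ :=
  mpow ((1 - α) • mpow A p + α • mpow B p) (1 / p)

/-- `t`-weighted geometric mean `A #_t B = A^{1/2} (A^{-1/2} B A^{-1/2})^t A^{1/2}`. -/
noncomputable def gmean {n : ℕ} (t : ℝ) (A B : Matrix (Fin n) (Fin n) ℂ) :
    Matrix (Fin n) (Fin n) ℂ :=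
  mpow A (1 / 2) * mpow (mpow A (-(1 / 2)) * B * mpow A (-(1 / 2))) t * mpow A (1 / 2)

/-- Quasi `α`-weighted geometric mean `G_{α,p}(A,B) = (A^p #_α B^p)^{1/p}`. -/
noncomputable def qgm {n : ℕ} (α p : ℝ) (A B : Matrix (Fin n) (Fin n) ℂ) :
    Matrix (Fin n) (Fin n) ℂ :=
  mpow (gmean α (mpow A p) (mpow B p)) (1 / p)

/-- Rényi mean `R_{α,p}(A,B) = (A^{((1-α)/2)p} B^{αp} A^{((1-α)/2)p})^{1/p}`. -/
noncomputable def renyiMean {n : ℕ} (α p : ℝ) (A B : Matrix (Fin n) (Fin n) ℂ) :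
    Matrix (Fin n) (Fin n) ℂ :=
  mpow (mpow A ((1 - α) / 2 * p) * mpow B (α * p) * mpow A ((1 - α) / 2 * p)) (1 / p)

/-- `α`-weighted Log-Euclidean mean `LE_α(A,B) = exp((1-α) log A + α log B)`. -/
noncomputable def logEuclid {n : ℕ} (α : ℝ) (A B : Matrix (Fin n) (Fin n) ℂ) :
    Matrix (Fin n) (Fin n) ℂ :=
  mexp ((1 - α) • mlog A + α • mlog B)

/-- Quasi `α`-weighted spectral geometric mean
`SG_{α,p}(A,B) = ((A^{-p} # B^p)^α A^p (A^{-p} # B^p)^α)^{1/p}` where `# = #_{1/2}`. -/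
noncomputable def sgm {n : ℕ} (α p : ℝ) (A B : Matrix (Fin n) (Fin n) ℂ) :
    Matrix (Fin n) (Fin n) ℂ :=
  mpow (mpow (gmean (1 / 2) (mpow A (-p)) (mpow B p)) α * mpow A p *
    mpow (gmean (1 / 2) (mpow A (-p)) (mpow B p)) α) (1 / p)

/-- Loewner order: `X ≤ Y` iff `Y - X` is positive semidefinite. -/
def Loewner {n : ℕ} (X Y : Matrix (Fin n) (Fin n) ℂ) : Prop := (Y - X).PosSemidef

/-- Eigenvalues of a Hermitian matrix arranged in decreasing order:
`eigsDesc A 0 ≥ eigsDesc A 1 ≥ …` (junk value `0` on non-Hermitian matrices). -/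
noncomputable def eigsDesc {n : ℕ} (A : Matrix (Fin n) (Fin n) ℂ) (i : Fin n) : ℝ :=
  if hA : A.IsHermitian then (hA.eigenvalues ∘ Tuple.sort hA.eigenvalues) i.rev else 0

/-! With `c = ((1 - α) / 2) • log A` and `d = α • log B`, the Rényi mean equals
`exp (p⁻¹ • log M(p))` for `M(p) = exp (p • c) * exp (p • d) * exp (p • c)`. Since `M(0) = 1`,
`M'(0) = c + d + c`, and the operator logarithm agrees with `X ↦ X - 1` up to `O(‖X - 1‖²)`
near `1`, the curve `log ∘ M` also has derivative `c + d + c = (1 - α) • log A + α • log B`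
at `0`; hence `p⁻¹ • log M(p)` tends to it, and continuity of `exp` gives the limit. The
argument works in any unital C⋆-algebra; matrices with the L2 operator norm are one. -/

lemma Real.abs_log_sub_sub_one_le {x : ℝ} (hx : 0 < x) (h : |x - 1| ≤ 1 / 2) :
    |Real.log x - (x - 1)| ≤ 2 * (x - 1) ^ 2 := by
  have hle : Real.log x ≤ x - 1 := Real.log_le_sub_one_of_pos hx
  have hinv : Real.log x⁻¹ ≤ x⁻¹ - 1 := Real.log_le_sub_one_of_pos (by positivity)
  rw [Real.log_inv] at hinv
  have hmul : x * x⁻¹ = 1 := mul_inv_cancel₀ hx.ne'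
  rw [abs_le] at h ⊢
  constructor <;> nlinarith [sq_nonneg (x - 1), sq_nonneg x⁻¹, inv_pos.mpr hx]

namespace CFC
open Filter Topology NormedSpace Asymptotics

variable {A : Type*} [CStarAlgebra A]

lemma norm_log_sub_sub_one_le {a : A} (ha : IsSelfAdjoint a) (h : ‖a - 1‖ ≤ 1 / 2) :
    ‖log a - (a - 1)‖ ≤ 2 * ‖a - 1‖ ^ 2 := by
  nontriviality A
  have hspec : ∀ x ∈ spectrum ℝ a, |x - 1| ≤ ‖a - 1‖ := fun x hx => by
    have : x - 1 ∈ spectrum ℝ (a - algebraMap ℝ A 1) := by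
      rw [← spectrum.sub_singleton_eq]
      exact Set.sub_mem_sub hx rfl
    simpa using spectrum.norm_le_norm_of_mem this
  have hpos : ∀ x ∈ spectrum ℝ a, 0 < x := fun x hx => by
    have := abs_le.mp ((hspec x hx).trans h)
    linarith
  have hlog : log a - (a - 1) = cfc (fun x => Real.log x - (x - 1)) a := by
    rw [cfc_sub _ _ a (Real.continuousOn_log.mono fun x hx => (hpos x hx).ne'),
      cfc_sub (fun x : ℝ => x) (fun _ => 1) a, cfc_id' ℝ a, cfc_const_one ℝ a, log]
  rw [hlog]
  refine norm_cfc_le (by positivity) fun x hx => ?_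
  calc ‖Real.log x - (x - 1)‖ ≤ 2 * (x - 1) ^ 2 :=
        Real.abs_log_sub_sub_one_le (hpos x hx) ((hspec x hx).trans h)
    _ ≤ 2 * ‖a - 1‖ ^ 2 := by
        gcongr 2 * ?_
        exact sq_le_sq' (abs_le.mp (hspec x hx)).1 (abs_le.mp (hspec x hx)).2

lemma hasDerivAt_log_comp {M : ℝ → A} {K : A} (hsa : ∀ p, IsSelfAdjoint (M p)) (h0 : M 0 = 1)
    (hM : HasDerivAt M K 0) : HasDerivAt (fun p => log (M p)) K 0 := by
  have hlin := hasDerivAt_iff_isLittleO.mp hM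
  simp only [h0, sub_zero] at hlin
  have hO : (fun p => M p - 1) =O[𝓝 0] fun p => p := by
    simpa [h0] using hM.isBigO_sub
  have hsmall : Tendsto (fun p => M p - 1) (𝓝 0) (𝓝 0) := by
    simpa [h0] using (hM.continuousAt.tendsto.sub_const (1 : A))
  have hsq : (fun p => ‖M p - 1‖ ^ 2) =o[𝓝 0] fun p => p := by
    have := ((isLittleO_one_iff ℝ).mpr hsmall).norm_left.mul_isBigO hO.norm_left
    simpa [sq] using this
  have hquad : (fun p => log (M p) - (M p - 1)) =o[𝓝 0] fun p => p := by
    have hnear : ∀ᶠ p in 𝓝 0, ‖M p - 1‖ ≤ 1 / 2 :=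
      (tendsto_norm_zero.comp hsmall).eventually_le_const (by norm_num)
    refine IsBigO.trans_isLittleO (IsBigO.of_bound 2 ?_) hsq
    filter_upwards [hnear] with p hp
    simpa using norm_log_sub_sub_one_le (hsa p) hp
  rw [hasDerivAt_iff_isLittleO]
  simp only [h0, log_one, sub_zero]
  refine (hquad.add hlin).congr_left fun p => ?_
  abel

lemma tendsto_exp_inv_smul_log_exp_mul_exp_mul_exp {c d : A} (hc : IsSelfAdjoint c)
    (hd : IsSelfAdjoint d) :
    Tendsto (fun p : ℝ => exp (p⁻¹ • log (exp (p • c) * exp (p • d) * exp (p • c))))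
      (𝓝[≠] 0) (𝓝 (exp (c + d + c))) := by
  let : NormedAlgebra ℚ A := .restrictScalars ℚ ℂ A
  have hexp : ∀ x : A, HasDerivAt (fun p : ℝ => exp (p • x)) x 0 := fun x => by
    simpa using hasDerivAt_exp_smul_const (𝕂 := ℝ) x 0
  have hsa : ∀ p : ℝ, IsSelfAdjoint (exp (p • c) * exp (p • d) * exp (p • c)) := fun p =>
    ((IsSelfAdjoint.all p).smul hd).exp.conjugate_self ((IsSelfAdjoint.all p).smul hc).exp
  have hM : HasDerivAt (fun p : ℝ => exp (p • c) * exp (p • d) * exp (p • c)) (c + d + c) 0 := by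
    have h := ((hexp c).mul (hexp d)).mul (hexp c)
    simp only [Pi.mul_apply, zero_smul, exp_zero, one_mul, mul_one] at h
    exact h
  have hslope := hasDerivAt_iff_tendsto_slope.mp (hasDerivAt_log_comp hsa (by simp) hM)
  have hslope_eq : slope (fun p : ℝ => log (exp (p • c) * exp (p • d) * exp (p • c))) 0 =
      fun p => p⁻¹ • log (exp (p • c) * exp (p • d) * exp (p • c)) :=
    funext fun p => by simp [slope_def_module]
  exact (hslope_eq ▸ hslope).exp

variable [PartialOrder A] [StarOrderedRing A]

lemma exp_smul_log {a : A} (ha : IsStrictlyPositive a) (s : ℝ) :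
    exp (s • log a) = cfc (fun x : ℝ => x ^ s) a := by
  have hlog : ContinuousOn Real.log (spectrum ℝ a) :=
    Real.continuousOn_log.mono fun x hx => (ha.spectrum_pos hx).ne'
  rw [log, ← cfc_smul s Real.log a, ← real_exp_eq_normedSpace_exp,
    ← cfc_comp' Real.exp (fun x => s • Real.log x) a]
  exact cfc_congr fun x hx => by
    rw [smul_eq_mul, mul_comm, ← Real.rpow_def_of_pos (ha.spectrum_pos hx)]

lemma _root_.IsSelfAdjoint.isStrictlyPositive_exp {a : A} (ha : IsSelfAdjoint a) :
    IsStrictlyPositive (exp a) :=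
  let : NormedAlgebra ℚ A := .restrictScalars ℚ ℂ A
  (isUnit_exp a).isStrictlyPositive ha.exp_nonneg

lemma isStrictlyPositive_exp_mul_exp_mul_exp {c d : A} (hc : IsSelfAdjoint c)
    (hd : IsSelfAdjoint d) : IsStrictlyPositive (exp c * exp d * exp c) :=
  IsStrictlyPositive.conjugate_of_isUnit_of_isSelfAdjoint _ _ hc.isStrictlyPositive_exp.isUnit
    hc.exp hd.isStrictlyPositive_exp

end CFC

section Matrix
open scoped Matrix.Norms.L2Operator MatrixOrder
open NormedSpace
variable {n : ℕ}

lemma matFun_eq_cfc (f : ℝ → ℝ) (A : Matrix (Fin n) (Fin n) ℂ) : matFun f A = cfc f A := by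
  by_cases hA : A.IsHermitian
  · rw [matFun, dif_pos hA, hA.cfc_eq]
  · rw [matFun, dif_neg hA, cfc_apply_of_not_predicate (p := IsSelfAdjoint) (R := ℝ) A hA]

lemma mpow_eq_exp_smul_log {A : Matrix (Fin n) (Fin n) ℂ} (hA : A.PosDef) (s : ℝ) :
    mpow A s = exp (s • CFC.log A) :=
  (matFun_eq_cfc _ A).trans (CFC.exp_smul_log hA.isStrictlyPositive s).symm

lemma isSelfAdjoint_smul_log (t : ℝ) (A : Matrix (Fin n) (Fin n) ℂ) :
    IsSelfAdjoint (t • CFC.log A) :=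
  (IsSelfAdjoint.all t).smul IsSelfAdjoint.log

lemma logEuclid_eq_exp (α : ℝ) (A B : Matrix (Fin n) (Fin n) ℂ) :
    logEuclid α A B = exp ((1 - α) • CFC.log A + α • CFC.log B) := by
  rw [logEuclid, mexp, mlog, mlog, matFun_eq_cfc, matFun_eq_cfc, matFun_eq_cfc]
  exact CFC.real_exp_eq_normedSpace_exp
    ((isSelfAdjoint_smul_log _ A).add (isSelfAdjoint_smul_log α B))

lemma renyiMean_eq_exp {A B : Matrix (Fin n) (Fin n) ℂ} (hA : A.PosDef) (hB : B.PosDef)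
    (α p : ℝ) :
    renyiMean α p A B = exp (p⁻¹ • CFC.log (exp (p • (((1 - α) / 2) • CFC.log A)) *
      exp (p • (α • CFC.log B)) * exp (p • (((1 - α) / 2) • CFC.log A)))) := by
  have hM := (CFC.isStrictlyPositive_exp_mul_exp_mul_exp
    ((IsSelfAdjoint.all p).smul (isSelfAdjoint_smul_log ((1 - α) / 2) A))
    ((IsSelfAdjoint.all p).smul (isSelfAdjoint_smul_log α B))).posDef
  rw [renyiMean, mpow_eq_exp_smul_log hA, mpow_eq_exp_smul_log hB, mul_comm _ p, mul_comm α,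
    ← smul_smul, ← smul_smul, mpow_eq_exp_smul_log hM, one_div]

end Matrix

theorem stmt5_general (α : ℝ)
    (n : ℕ) (A B : Matrix (Fin n) (Fin n) ℂ) (hA : A.PosDef) (hB : B.PosDef) :
    Filter.Tendsto (fun p : ℝ => renyiMean α p A B) (nhdsWithin 0 (Set.Ioi 0))
      (nhds (logEuclid α A B)) := by
  open scoped Matrix.Norms.L2Operator in
  · have hsum : (1 - α) • CFC.log A + α • CFC.log B =
        ((1 - α) / 2) • CFC.log A + α • CFC.log B + ((1 - α) / 2) • CFC.log A := by
      module
    simp_rw [renyiMean_eq_exp hA hB, logEuclid_eq_exp, hsum]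
    exact (CFC.tendsto_exp_inv_smul_log_exp_mul_exp_mul_exp (isSelfAdjoint_smul_log _ A)
      (isSelfAdjoint_smul_log α B)).mono_left (nhdsGT_le_nhdsNE 0)

theorem stmt5 (α : ℝ) (hα0 : 0 < α) (hα1 : α < 1)
    (n : ℕ) (A B : Matrix (Fin n) (Fin n) ℂ) (hA : A.PosDef) (hB : B.PosDef) :
    Filter.Tendsto (fun p : ℝ => renyiMean α p A B) (nhdsWithin 0 (Set.Ioi 0))
      (nhds (logEuclid α A B)) :=
  stmt5_general α n A B hA hB
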